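/- (DPNR combined guarantee, Algorithm 2.) Let f : (Fin d → ℝ) → (Fin k → ℝ) satisfy the ℓ₁-sensitivity bound: for all x, x' : Fin d → ℝ agreeing on all but at most one coordinate, ∑_j |f(x)_j − f(x')_j| ≤ Δ, with Δ > 0. Let ε > 0, b = Δ/ε, and μ ∈ [0,1]. Consider the mechanism that, on input x, first samples a mask I : Fin d → {0,1} with i.i.d. coordinates satisfying P[I_j = 0] = μ, then outputs f(x ⊙ I) + r, where r has i.i.d. coordinates drawn from Lap(b) independently of I. This mechanism is ε'-differentially private with respect to word-level adjacency, where ε' = ln((1−μ)·exp(ε) + μ): for all x, x' agreeing on all but at most one coordinate and all measurable S ⊆ (Fin k → ℝ), the output distribution on input x assigns S at most exp(ε') times the mass assigned on input x'. -/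

import Mathlib

open MeasureTheory

/-- The Laplace distribution `Lap(b)` on `ℝ` with scale parameter `b`:
the measure with density `t ↦ (1/(2b))·exp(−|t|/b)` w.r.t. Lebesgue measure. -/
noncomputable def Lap (b : ℝ) : Measure ℝ :=
  (volume : Measure ℝ).withDensity
    fun t => ENNReal.ofReal ((1 / (2 * b)) * Real.exp (-|t| / b))

/-- The distribution on `Bool` of a single mask bit with dropout rate `μ`:
the bit is `0` (`false`) with probability `μ` and `1` (`true`) with
probability `1 − μ`. -/
noncomputable def maskBit (μ : ℝ) : Measure Bool :=
  (ENNReal.ofReal μ) • Measure.dirac false + (ENNReal.ofReal (1 - μ)) • Measure.dirac true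

/-- The distribution of the random mask `I : Fin d → {0,1}` with i.i.d.
coordinates, each `0` with probability `μ`. -/
noncomputable def maskLaw (d : ℕ) (μ : ℝ) : Measure (Fin d → Bool) :=
  Measure.pi fun _ : Fin d => maskBit μ

/-- The input `x` masked by `I`: coordinatewise, `(x ⊙ I) j = x j · I j`,
identifying the mask bit with the real numbers `0` and `1`. -/
def maskedInput {d : ℕ} (x : Fin d → ℝ) (I : Fin d → Bool) : Fin d → ℝ :=
  fun j => if I j then x j else 0

/-! Fix a coordinate `i` at which `x` and `x'` may differ and average over the bit `I i` first.
If the bit is dropped, both inputs are masked to the same vector, so the two outputs have the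
same law `B₀`. If it is kept, the masked inputs of `x` and `x'` are adjacent, as are the masked
input of `x` and the masked input of `x'` with bit `i` dropped, so by the Laplace mechanism the
output law `A₁` on `x` satisfies `A₁ ≤ e^ε B₁` and `A₁ ≤ e^ε B₀`. Writing `q = 1 - μ`, it remains
to check `μ B₀ + q A₁ ≤ (q e^ε + μ) (μ B₀ + q B₁)`, which holds because
`A₁ + B₀ ≤ e^ε B₀ + B₁`. -/

open scoped ENNReal
open MeasureTheory

namespace MeasureTheory

theorem lintegral_fin_nat_prod_eq_prod {n : ℕ} {α : Type*} [MeasurableSpace α]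
    (μ : Fin n → Measure α) [∀ i, SigmaFinite (μ i)] {f : Fin n → α → ℝ≥0∞}
    (hf : ∀ i, Measurable (f i)) :
    ∫⁻ x, ∏ i, f i (x i) ∂Measure.pi μ = ∏ i, ∫⁻ y, f i y ∂μ i := by
  induction n with
  | zero => simp
  | succ n ih =>
    have hprod : Measurable fun x : Fin (n + 1) → α => ∏ i, f i (x i) :=
      Finset.measurable_prod _ fun i _ => (hf i).comp (measurable_pi_apply i)
    calc _ = ∫⁻ x : α × (Fin n → α), f 0 x.1 * ∏ i : Fin n, f i.succ (x.2 i)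
            ∂(μ 0).prod (Measure.pi fun i => μ i.succ) := by
          rw [← ((measurePreserving_piFinSuccAbove μ 0).symm).lintegral_comp hprod]
          simp [MeasurableEquiv.piFinSuccAbove_symm_apply, Fin.prod_univ_succ]
      _ = (∫⁻ y, f 0 y ∂μ 0) * ∏ i : Fin n, ∫⁻ y, f i.succ y ∂μ i.succ := by
          rw [← ih _ fun i : Fin n => hf i.succ]
          exact lintegral_prod_mul (hf 0).aemeasurable (Finset.measurable_prod _
            fun (i : Fin n) _ => (hf i.succ).comp (measurable_pi_apply i)).aemeasurable
      _ = ∏ i, ∫⁻ y, f i y ∂μ i := (Fin.prod_univ_succ fun i => ∫⁻ y, f i y ∂μ i).symm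

theorem Measure.pi_withDensity {n : ℕ} {α : Type*} [MeasurableSpace α]
    (μ : Fin n → Measure α) [∀ i, SigmaFinite (μ i)] {f : Fin n → α → ℝ≥0∞}
    (hf : ∀ i, Measurable (f i)) [∀ i, SigmaFinite ((μ i).withDensity (f i))] :
    Measure.pi (fun i => (μ i).withDensity (f i))
      = (Measure.pi μ).withDensity fun x => ∏ i, f i (x i) := by
  refine Measure.pi_eq fun s hs => ?_
  rw [withDensity_apply _ (MeasurableSet.univ_pi hs), Measure.restrict_pi_pi,
    lintegral_fin_nat_prod_eq_prod _ hf]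
  exact Finset.prod_congr rfl fun i _ => (withDensity_apply _ (hs i)).symm

theorem map_add_left_withDensity {G : Type*} [AddCommGroup G] [MeasurableSpace G]
    [MeasurableAdd G] (ν : Measure G) [ν.IsAddLeftInvariant] (g : G → ℝ≥0∞) (v : G) :
    (ν.withDensity g).map (v + ·) = ν.withDensity fun u => g (u - v) := by
  ext S hS
  rw [Measure.map_apply (measurable_const_add v) hS,
    withDensity_apply _ (measurable_const_add v hS), withDensity_apply _ hS]
  refine Eq.trans ?_ ((measurePreserving_add_left ν v).setLIntegral_comp_preimage_emb
    (MeasurableEquiv.addLeft v).measurableEmbedding (fun u => g (u - v)) S)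
  simp only [add_sub_cancel_left]

theorem lintegral_pi_eq_lintegral_update {ι : Type*} [Fintype ι] [DecidableEq ι]
    {X : ι → Type*} [∀ i, MeasurableSpace (X i)] (μ : ∀ i, Measure (X i))
    [∀ i, IsProbabilityMeasure (μ i)] {f : (∀ i, X i) → ℝ≥0∞} (hf : Measurable f) (i : ι) :
    ∫⁻ x, f x ∂Measure.pi μ = ∫⁻ x, ∫⁻ y, f (Function.update x i y) ∂μ i ∂Measure.pi μ := by
  rw [← lmarginal_singleton]
  refine lintegral_eq_of_lmarginal_eq {i} hf (hf.lmarginal μ) ?_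
  ext x
  rw [lmarginal_singleton (∫⋯∫⁻_{i}, f ∂μ) i]
  simp only [lmarginal_update_of_mem μ (Finset.mem_singleton_self i), lintegral_const,
    measure_univ, mul_one]

end MeasureTheory

noncomputable def lapDensity (b t : ℝ) : ℝ≥0∞ :=
  ENNReal.ofReal ((1 / (2 * b)) * Real.exp (-|t| / b))

theorem measurable_lapDensity (b : ℝ) : Measurable (lapDensity b) := by
  unfold lapDensity; fun_prop

theorem lap_eq_withDensity (b : ℝ) : Lap b = volume.withDensity (lapDensity b) := rfl

theorem lapDensity_le_exp_mul {b : ℝ} (hb : 0 ≤ b) (s t : ℝ) :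
    lapDensity b s ≤ ENNReal.ofReal (Real.exp (|s - t| / b)) * lapDensity b t := by
  rw [lapDensity, lapDensity, ← ENNReal.ofReal_mul (Real.exp_nonneg _)]
  refine ENNReal.ofReal_le_ofReal ?_
  have hexp : -|s| / b ≤ |s - t| / b + -|t| / b := by
    rw [← add_div]
    exact div_le_div_of_nonneg_right
      (by linarith [abs_sub_abs_le_abs_sub t s, abs_sub_comm s t]) hb
  calc 1 / (2 * b) * Real.exp (-|s| / b)
      ≤ 1 / (2 * b) * Real.exp (|s - t| / b + -|t| / b) := by gcongr
    _ = Real.exp (|s - t| / b) * (1 / (2 * b) * Real.exp (-|t| / b)) := by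
      rw [Real.exp_add]; ring

theorem map_add_pi_lap {k : ℕ} (b : ℝ) (v : Fin k → ℝ) :
    (Measure.pi fun _ : Fin k => Lap b).map (v + ·)
      = volume.withDensity fun u => ∏ i, lapDensity b (u i - v i) := by
  have : SigmaFinite (volume.withDensity (lapDensity b)) := SigmaFinite.withDensity_ofReal _
  simp_rw [lap_eq_withDensity]
  rw [Measure.pi_withDensity _ fun _ => measurable_lapDensity b, ← volume_pi,
    map_add_left_withDensity]
  rfl

theorem map_add_pi_lap_le {k : ℕ} {b : ℝ} (hb : 0 ≤ b) (v w : Fin k → ℝ) :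
    (Measure.pi fun _ : Fin k => Lap b).map (v + ·)
      ≤ ENNReal.ofReal (Real.exp ((∑ i, |v i - w i|) / b))
        • (Measure.pi fun _ : Fin k => Lap b).map (w + ·) := by
  rw [map_add_pi_lap, map_add_pi_lap, ← withDensity_smul' _ _ ENNReal.ofReal_ne_top]
  refine withDensity_mono (Filter.Eventually.of_forall fun u => ?_)
  have hfactor : ∏ i, ENNReal.ofReal (Real.exp (|v i - w i| / b))
      = ENNReal.ofReal (Real.exp ((∑ i, |v i - w i|) / b)) := by
    rw [← ENNReal.ofReal_prod_of_nonneg fun i _ => Real.exp_nonneg _, ← Real.exp_sum,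
      Finset.sum_div]
  calc ∏ i, lapDensity b (u i - v i)
      ≤ ∏ i, ENNReal.ofReal (Real.exp (|v i - w i| / b)) * lapDensity b (u i - w i) := by
        gcongr with i
        simpa [abs_sub_comm] using lapDensity_le_exp_mul hb (u i - v i) (u i - w i)
    _ = _ := by rw [Finset.prod_mul_distrib, hfactor]; rfl

theorem map_add_pi_lap_apply_le_exp_mul {k : ℕ} {Δ ε : ℝ} (hΔ : 0 < Δ) (hε : 0 < ε)
    {v w : Fin k → ℝ} (hvw : ∑ i, |v i - w i| ≤ Δ) (S : Set (Fin k → ℝ)) :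
    (Measure.pi fun _ : Fin k => Lap (Δ / ε)).map (v + ·) S
      ≤ ENNReal.ofReal (Real.exp ε) * (Measure.pi fun _ : Fin k => Lap (Δ / ε)).map (w + ·) S := by
  have hexp : (∑ i, |v i - w i|) / (Δ / ε) ≤ ε := by
    rw [div_div_eq_mul_div, div_le_iff₀ hΔ, mul_comm ε]
    exact mul_le_mul_of_nonneg_right hvw hε.le
  calc _ ≤ ENNReal.ofReal (Real.exp ((∑ i, |v i - w i|) / (Δ / ε)))
          * (Measure.pi fun _ : Fin k => Lap (Δ / ε)).map (w + ·) S :=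
        map_add_pi_lap_le (div_nonneg hΔ.le hε.le) v w S
    _ ≤ _ := by gcongr

theorem lintegral_maskBit (μ : ℝ) (g : Bool → ℝ≥0∞) :
    ∫⁻ b, g b ∂maskBit μ = ENNReal.ofReal μ * g false + ENNReal.ofReal (1 - μ) * g true := by
  simp only [maskBit, lintegral_add_measure, lintegral_smul_measure, lintegral_dirac, smul_eq_mul]

theorem isProbabilityMeasure_maskBit {μ : ℝ} (h0 : 0 ≤ μ) (h1 : μ ≤ 1) :
    IsProbabilityMeasure (maskBit μ) := by
  constructor
  rw [← setLIntegral_one, Measure.restrict_univ, lintegral_maskBit, mul_one, mul_one,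
    ← ENNReal.ofReal_add h0 (by linarith), add_sub_cancel, ENNReal.ofReal_one]

theorem lintegral_maskLaw_eq {d : ℕ} {μ : ℝ} (h0 : 0 ≤ μ) (h1 : μ ≤ 1)
    (g : (Fin d → Bool) → ℝ≥0∞) (i : Fin d) :
    ∫⁻ I, g I ∂maskLaw d μ = ∫⁻ I, (ENNReal.ofReal μ * g (Function.update I i false)
      + ENNReal.ofReal (1 - μ) * g (Function.update I i true)) ∂maskLaw d μ := by
  have := isProbabilityMeasure_maskBit h0 h1
  rw [maskLaw, lintegral_pi_eq_lintegral_update _ (measurable_of_countable g) i]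
  simp_rw [lintegral_maskBit]

theorem subsampling_mixture_le {p q E a s t : ℝ≥0∞} (hpq : p + q = 1) (hE : 1 ≤ E)
    (hsa : s ≤ E * a) (hst : s ≤ E * t) :
    p * a + q * s ≤ (q * E + p) * (p * a + q * t) := by
  have hkey : s + a ≤ E * a + t := by
    rcases le_total a t with hat | hta
    · exact add_le_add hsa hat
    · obtain ⟨e, rfl⟩ : ∃ e, E = 1 + e := ⟨E - 1, (add_tsub_cancel_of_le hE).symm⟩
      calc s + a ≤ (1 + e) * t + a := by gcongr
        _ = t + e * t + a := by ring
        _ ≤ t + e * a + a := by gcongr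
        _ = (1 + e) * a + t := by ring
  calc p * a + q * s = (p + q) * (p * a + q * s) := by rw [hpq, one_mul]
    _ = p * p * a + p * q * (s + a) + q * q * s := by ring
    _ ≤ p * p * a + p * q * (E * a + t) + q * q * (E * t) := by gcongr
    _ = (q * E + p) * (p * a + q * t) := by ring

theorem maskedInput_eq_of_ne {d : ℕ} {x x' : Fin d → ℝ} {I J : Fin d → Bool} {i : Fin d}
    (hx : ∀ j, j ≠ i → x j = x' j) (hIJ : ∀ j, j ≠ i → I j = J j) :
    ∀ j, j ≠ i → maskedInput x I j = maskedInput x' J j := by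
  intro j hj
  simp only [maskedInput, hx j hj, hIJ j hj]

theorem maskedInput_update_false {d : ℕ} {x x' : Fin d → ℝ} {i : Fin d}
    (hx : ∀ j, j ≠ i → x j = x' j) (I : Fin d → Bool) :
    maskedInput x (Function.update I i false) = maskedInput x' (Function.update I i false) := by
  funext j
  rcases eq_or_ne j i with rfl | hj
  · simp [maskedInput]
  · exact maskedInput_eq_of_ne hx (fun _ _ => rfl) j hj

theorem dpnr_combined_guarantee_general (d k : ℕ)
    (f : (Fin d → ℝ) → (Fin k → ℝ)) (Δ ε μ : ℝ)
    (hΔ : 0 < Δ) (hε : 0 < ε) (hμ0 : 0 ≤ μ) (hμ1 : μ ≤ 1)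
    (hsens : ∀ x x' : Fin d → ℝ, (∃ i, ∀ j, j ≠ i → x j = x' j) →
      ∑ j, |f x j - f x' j| ≤ Δ)
    (x x' : Fin d → ℝ) (hadj : ∃ i, ∀ j, j ≠ i → x j = x' j)
    (S : Set (Fin k → ℝ)) :
    (∫⁻ I : Fin d → Bool,
        Measure.map (fun r => f (maskedInput x I) + r)
          (Measure.pi fun _ : Fin k => Lap (Δ / ε)) S ∂(maskLaw d μ)) ≤
      ENNReal.ofReal (Real.exp (Real.log ((1 - μ) * Real.exp ε + μ))) *
        ∫⁻ I : Fin d → Bool,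
          Measure.map (fun r => f (maskedInput x' I) + r)
            (Measure.pi fun _ : Fin k => Lap (Δ / ε)) S ∂(maskLaw d μ) := by
  obtain ⟨i, hi⟩ := hadj
  have hpq : ENNReal.ofReal μ + ENNReal.ofReal (1 - μ) = 1 := by
    rw [← ENNReal.ofReal_add hμ0 (by linarith), add_sub_cancel, ENNReal.ofReal_one]
  have hE : 1 ≤ ENNReal.ofReal (Real.exp ε) := by
    simpa using ENNReal.ofReal_le_ofReal (Real.one_le_exp hε.le)
  have hconst : ENNReal.ofReal (Real.exp (Real.log ((1 - μ) * Real.exp ε + μ)))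
      = ENNReal.ofReal (1 - μ) * ENNReal.ofReal (Real.exp ε) + ENNReal.ofReal μ := by
    have hpos : 0 < (1 - μ) * Real.exp ε + μ := by nlinarith [Real.one_le_exp hε.le]
    rw [Real.exp_log hpos, ENNReal.ofReal_add (by positivity) hμ0,
      ENNReal.ofReal_mul (by linarith)]
  refine (lintegral_maskLaw_eq hμ0 hμ1 _ i).trans_le ?_
  conv_rhs =>
    rw [lintegral_maskLaw_eq hμ0 hμ1 _ i, ← lintegral_const_mul' _ _ ENNReal.ofReal_ne_top]
  refine lintegral_mono fun I => ?_
  have hlaplace (J : Fin d → Bool) (hJ : ∀ j, j ≠ i → Function.update I i true j = J j) :=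
    map_add_pi_lap_apply_le_exp_mul hΔ hε (hsens _ _ ⟨i, maskedInput_eq_of_ne hi hJ⟩) S
  rw [hconst, maskedInput_update_false hi]
  exact subsampling_mixture_le hpq hE
    (hlaplace _ fun j hj => by simp only [Function.update_of_ne hj]) (hlaplace _ fun _ _ => rfl)

/-- DPNR combined guarantee (Algorithm 2). Suppose `f` has ℓ₁-sensitivity at
most `Δ > 0` over word-level adjacent inputs, `ε > 0`, `b = Δ/ε`, `μ ∈ [0,1]`.
The mechanism that on input `x` samples a mask `I` (i.i.d. coordinates,
`P[I_j = 0] = μ`), then outputs `f(x ⊙ I) + r` with the coordinates of `r`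
i.i.d. `Lap(b)` independent of `I`, is `ε'`-differentially private w.r.t.
word-level adjacency, where `ε' = ln((1−μ)·exp(ε) + μ)`. -/
theorem dpnr_combined_guarantee (d k : ℕ)
    (f : (Fin d → ℝ) → (Fin k → ℝ)) (Δ ε μ : ℝ)
    (hΔ : 0 < Δ) (hε : 0 < ε) (hμ0 : 0 ≤ μ) (hμ1 : μ ≤ 1)
    (hsens : ∀ x x' : Fin d → ℝ, (∃ i, ∀ j, j ≠ i → x j = x' j) →
      ∑ j, |f x j - f x' j| ≤ Δ)
    (x x' : Fin d → ℝ) (hadj : ∃ i, ∀ j, j ≠ i → x j = x' j)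
    (S : Set (Fin k → ℝ)) (hS : MeasurableSet S) :
    (∫⁻ I : Fin d → Bool,
        Measure.map (fun r => f (maskedInput x I) + r)
          (Measure.pi fun _ : Fin k => Lap (Δ / ε)) S ∂(maskLaw d μ)) ≤
      ENNReal.ofReal (Real.exp (Real.log ((1 - μ) * Real.exp ε + μ))) *
        ∫⁻ I : Fin d → Bool,
          Measure.map (fun r => f (maskedInput x' I) + r)
            (Measure.pi fun _ : Fin k => Lap (Δ / ε)) S ∂(maskLaw d μ) :=
  dpnr_combined_guarantee_general d k f Δ ε μ hΔ hε hμ0 hμ1 hsens x x' hadj S
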